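/- arXiv:1410.2016 — 3 statements merged into one kernel-verified Lean document; each statement's English description precedes it below -/
import Mathlib

section
/- For an invertible real n×n matrix X, the absolute value of its determinant is less than or equal to the product of the Euclidean norms of its columns (Hadamard's inequality). -/
open Matrix Filter

/-- The k-th largest singular value (0-indexed) of a real square matrix:
square roots of the eigenvalues of `Xᵀ * X`, sorted in decreasing order. -/
noncomputable def svalDesc {n : ℕ} (X : Matrix (Fin n) (Fin n) ℝ) (k : Fin n) : ℝ :=
  Real.sqrt (((Matrix.isHermitian_conjTranspose_mul_self X).eigenvalues ∘
    Tuple.sort ((Matrix.isHermitian_conjTranspose_mul_self X).eigenvalues)) k.rev)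

/-- Euclidean norm of the j-th column of X. -/
noncomputable def colNorm {n : ℕ} (X : Matrix (Fin n) (Fin n) ℝ) (j : Fin n) : ℝ :=
  Real.sqrt (∑ i, (X i j) ^ 2)

/-!
Apply `det A ≤ ∏ i, A i i` for positive semidefinite `A` to the Gram matrix `Xᵀ X`: its
determinant is `det X ^ 2` and its diagonal holds the squared column norms. For positive definite
`A`, conjugating by `diag (A i i)^(-1/2)` reduces to unit diagonal; the eigenvalues are then
nonnegative with sum `tr A = n`, so by AM-GM their product `det A` is at most 1.
-/

theorem Real.prod_le_mean_pow {ι : Type*} (s : Finset ι) {z : ι → ℝ} (hz : ∀ i ∈ s, 0 ≤ z i) :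
    ∏ i ∈ s, z i ≤ ((∑ i ∈ s, z i) / s.card) ^ s.card := by
  rcases s.eq_empty_or_nonempty with rfl | hs
  · simp
  have hcard : (0 : ℝ) < s.card := by exact_mod_cast hs.card_pos
  have amgm := Real.geom_mean_le_arith_mean s (fun _ ↦ 1) z (fun _ _ ↦ zero_le_one)
    (by simpa using hcard) hz
  simp only [Real.rpow_one, one_mul, Finset.sum_const, nsmul_eq_mul, mul_one] at amgm
  rw [Real.rpow_inv_le_iff_of_pos (Finset.prod_nonneg hz)
    (div_nonneg (Finset.sum_nonneg hz) hcard.le) hcard] at amgm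
  exact_mod_cast amgm

namespace Matrix

variable {ι : Type*} [Fintype ι] [DecidableEq ι]

theorem PosSemidef.det_le_one_of_diag_eq_one {A : Matrix ι ι ℝ} (hA : A.PosSemidef)
    (hdiag : ∀ i, A i i = 1) : A.det ≤ 1 := by
  have htrace : ∑ i, hA.isHermitian.eigenvalues i = Fintype.card ι := by
    simpa [trace, hdiag] using hA.isHermitian.trace_eq_sum_eigenvalues.symm
  have := Real.prod_le_mean_pow Finset.univ fun i _ ↦ hA.eigenvalues_nonneg i
  rw [hA.isHermitian.det_eq_prod_eigenvalues]
  simp only [RCLike.ofReal_real_eq_id, id, Finset.card_univ, htrace] at this ⊢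
  exact this.trans (pow_le_one₀ (by positivity) (div_self_le_one _))

theorem PosDef.det_le_prod_diag {A : Matrix ι ι ℝ} (hA : A.PosDef) : A.det ≤ ∏ i, A i i := by
  have hpos : ∀ i, 0 < A i i := fun i ↦ hA.diag_pos
  have hprod : 0 < ∏ i, A i i := Finset.prod_pos fun i _ ↦ hpos i
  set D := diagonal fun i ↦ (√(A i i))⁻¹
  have hdiag : ∀ i, (Dᴴ * A * D) i i = 1 := fun i ↦ by
    simp only [D, diagonal_conjTranspose, mul_diagonal, diagonal_mul, star_trivial]
    field_simp
    rw [Real.sq_sqrt (hpos i).le, div_self (hpos i).ne']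
  have hdet : (Dᴴ * A * D).det = A.det / ∏ i, A i i := by
    rw [← Real.sq_sqrt hprod.le, Real.sqrt_prod _ fun i _ ↦ (hpos i).le]
    simp only [D, det_mul, det_conjTranspose, det_diagonal, star_trivial, Finset.prod_inv_distrib]
    ring
  rw [← div_le_one hprod, ← hdet]
  exact (hA.posSemidef.conjTranspose_mul_mul_same D).det_le_one_of_diag_eq_one hdiag

theorem PosSemidef.det_le_prod_diag {A : Matrix ι ι ℝ} (hA : A.PosSemidef) :
    A.det ≤ ∏ i, A i i := by
  by_cases hdet : IsUnit A.det
  · exact (hA.posDef_iff_isUnit.mpr ((isUnit_iff_isUnit_det A).mpr hdet)).det_le_prod_diag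
  · rw [isUnit_iff_ne_zero, not_not] at hdet
    exact hdet ▸ Finset.prod_nonneg fun i _ ↦ hA.diag_nonneg

end Matrix

theorem hadamard_det_le_prod_colNorm_general {n : ℕ} (X : Matrix (Fin n) (Fin n) ℝ) :
    |X.det| ≤ ∏ j, colNorm X j := by
  have hgram : X.det ^ 2 ≤ ∏ j, ∑ i, X i j ^ 2 := by
    simpa [det_mul, sq, mul_apply] using (posSemidef_conjTranspose_mul_self X).det_le_prod_diag
  refine abs_le_of_sq_le_sq ?_ (Finset.prod_nonneg fun j _ ↦ Real.sqrt_nonneg _)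
  simpa [colNorm, ← Finset.prod_pow, Real.sq_sqrt, Finset.sum_nonneg, sq_nonneg] using hgram

/-- Hadamard's inequality: for an invertible real n×n matrix,
|det X| is at most the product of the Euclidean norms of its columns. -/
theorem hadamard_det_le_prod_colNorm {n : ℕ} (X : Matrix (Fin n) (Fin n) ℝ)
    (hX : IsUnit X.det) :
    |X.det| ≤ ∏ j, colNorm X j :=
  hadamard_det_le_prod_colNorm_general X
end

section
/- Let X be an invertible real n×n matrix and Q an invertible real n×n matrix. Then for every k = 1,...,n: ∏_{i=1}^k σ_i^o(XQ) ≤ ∏_{i=1}^k σ_i^o(X)·σ_i^o(Q) and ∏_{i=1}^k σ_i^o(X) ≤ ∏_{i=1}^k σ_i^o(XQ)·σ_i^o(Q⁻¹), where σ_i^o denote singular values in decreasing order. -/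
/-!
The product of the `k + 1` largest singular values of `M` is the square root of the largest
eigenvalue of the compound matrix `C (Mᵀ M)`, the matrix of `Λᵏ⁺¹ (Mᵀ M)` in the basis
indexed by `(k + 1)`-subsets. By Cauchy–Binet, `C` is multiplicative and commutes with
transposition, so diagonalising `Mᵀ M = U D Uᵀ` gives `C (Mᵀ M) = C U · C D · (C U)ᵀ` with `C U`
orthogonal and `C D` diagonal with entries the products of `k + 1` eigenvalues of `Mᵀ M`; the
largest of these is the product of the `k + 1` largest eigenvalues. For a unit top eigenvector
`z` of `C ((A B)ᵀ (A B)) = (C B)ᵀ · C (Aᵀ A) · C B` this gives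
`∏ σᵢ(A B)² = ⟪C B z, C (Aᵀ A) (C B z)⟫ ≤ ∏ σᵢ(A)² ‖C B z‖² ≤ ∏ σᵢ(A)² ∏ σᵢ(B)²`.
The second inequality is the first one for `X Q` and `Q⁻¹`.
-/

open Matrix Filter

open Finset Equiv Function

theorem Fin.val_le_val_of_strictMono {m n : ℕ} {f : Fin m → Fin n} (hf : StrictMono f)
    (j : Fin m) : (j : ℕ) ≤ f j := by
  simpa using card_le_card_of_injOn f (fun i hi => mem_Iio.mpr (hf (mem_Iio.mp hi)))
    hf.injective.injOn (s := Iio j) (t := Iio (f j))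

section AntitoneProd

variable {R : Type*} [CommMonoidWithZero R] [PartialOrder R] [ZeroLEOneClass R] [PosMulMono R]
  {n : ℕ} {k : Fin n} {s : Finset (Fin n)}

theorem Finset.prod_le_prod_Iic_of_antitone {g : Fin n → R} (hg : Antitone g)
    (hg0 : ∀ i, 0 ≤ g i) (hs : s.card = k + 1) : ∏ i ∈ s, g i ≤ ∏ i ∈ Iic k, g i := by
  have hk : (k : ℕ) + 1 ≤ n := k.isLt
  calc ∏ i ∈ s, g i = ∏ j : Fin (k + 1), g (s.orderEmbOfFin hs j) := by
        conv_lhs => rw [← map_orderEmbOfFin_univ s hs, prod_map]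
        rfl
    _ ≤ ∏ j : Fin (k + 1), g (j.castLE hk) :=
        prod_le_prod (fun _ _ => hg0 _) fun j _ =>
          hg (Fin.val_le_val_of_strictMono (s.orderEmbOfFin hs).strictMono j)
    _ = ∏ i ∈ Iic k, g i := by
        have hlast : (Fin.last k).castLE hk = k := Fin.ext rfl
        conv_rhs =>
          rw [← hlast, Fin.prod_Iic_castLE, show Iic (Fin.last (k : ℕ)) = univ from Iic_top]

theorem Finset.prod_le_prod_Iic_of_antitone_comp {μ : Fin n → R} (hμ0 : ∀ i, 0 ≤ μ i)
    {τ : Perm (Fin n)} (hτ : Antitone (μ ∘ τ)) (hs : s.card = k + 1) :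
    ∏ i ∈ s, μ i ≤ ∏ i ∈ Iic k, μ (τ i) :=
  calc ∏ i ∈ s, μ i = ∏ i ∈ s.map τ.symm.toEmbedding, μ (τ i) := by simp [prod_map]
    _ ≤ _ := prod_le_prod_Iic_of_antitone hτ (fun _ => hμ0 _) (by rwa [card_map])

end AntitoneProd

abbrev SubsetOfCard (ι : Type*) (m : ℕ) := {s : Finset ι // s.card = m}

namespace SubsetOfCard

variable {ι : Type*} [LinearOrder ι] {m : ℕ}

noncomputable def orderEmb (S : SubsetOfCard ι m) : Fin m ↪o ι := S.1.orderEmbOfFin S.2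

theorem image_orderEmb_comp_perm (S : SubsetOfCard ι m) (π : Perm (Fin m)) :
    univ.image (S.orderEmb ∘ π) = S.1 := by
  rw [← image_image, image_univ_equiv, orderEmb, image_orderEmbOfFin_univ]

theorem exists_orderEmb_comp_perm_eq {f : Fin m → ι} (hf : Injective f) :
    ∃ (S : SubsetOfCard ι m) (π : Perm (Fin m)), S.orderEmb ∘ π = f := by
  let S : SubsetOfCard ι m := ⟨univ.image f, by rw [card_image_of_injective _ hf, card_fin]⟩
  let π : Fin m → Fin m := fun i =>
    (S.1.orderIsoOfFin S.2).symm ⟨f i, mem_image_of_mem f (mem_univ i)⟩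
  have hπ : Injective π := fun a b hab => hf (congrArg Subtype.val ((OrderIso.injective _) hab))
  refine ⟨S, Equiv.ofBijective π (Finite.injective_iff_bijective.mp hπ), funext fun i => ?_⟩
  simp [orderEmb, π, ← coe_orderIsoOfFin_apply]

theorem sum_injective_eq_sum_sum_perm [Fintype ι] {M : Type*} [AddCommMonoid M]
    (F : (Fin m → ι) → M) :
    ∑ f : Fin m → ι with Injective f, F f =
      ∑ S : SubsetOfCard ι m, ∑ π : Perm (Fin m), F (S.orderEmb ∘ π) := by
  rw [← Fintype.sum_prod_type']
  refine (sum_bij (fun p _ => p.1.orderEmb ∘ p.2) (fun p _ => ?_) (fun p _ q _ h => ?_)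
    (fun f hf => ?_) (fun _ _ => rfl)).symm
  · simpa using p.1.orderEmb.injective.comp p.2.injective
  · obtain ⟨S, π⟩ := p
    obtain ⟨T, σ⟩ := q
    obtain rfl : S = T := Subtype.ext <| by
      rw [← image_orderEmb_comp_perm S π, ← image_orderEmb_comp_perm T σ]
      exact congrArg (univ.image ·) h
    exact Prod.ext rfl (Equiv.ext fun i => S.orderEmb.injective (congrFun h i))
  · obtain ⟨S, π, hπ⟩ := exists_orderEmb_comp_perm_eq (mem_filter.mp hf).2
    exact ⟨(S, π), mem_univ _, hπ⟩

end SubsetOfCard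

open SubsetOfCard

namespace Matrix

variable {ι R : Type*} [LinearOrder ι] [CommRing R] {m : ℕ}

theorem det_mul_eq_sum_det_submatrix [Fintype ι] (A : Matrix (Fin m) ι R)
    (B : Matrix ι (Fin m) R) :
    (A * B).det = ∑ S : SubsetOfCard ι m,
      (A.submatrix id S.orderEmb).det * (B.submatrix S.orderEmb id).det := by
  calc (A * B).det = ∑ f : Fin m → ι, (A.submatrix id f).det * ∏ i, B (f i) i := by
        simp only [det_apply', mul_apply, prod_univ_sum, mul_sum, Fintype.piFinset_univ,
          submatrix_apply, id, sum_mul]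
        rw [sum_comm]
        exact sum_congr rfl fun f _ => sum_congr rfl fun σ _ => by rw [prod_mul_distrib, mul_assoc]
    _ = ∑ f : Fin m → ι with Injective f, (A.submatrix id f).det * ∏ i, B (f i) i := by
        refine (sum_subset (filter_subset _ _) fun f _ hf => ?_).symm
        obtain ⟨i, j, hij, hne⟩ := not_injective_iff.mp (by simpa using hf)
        rw [det_zero_of_column_eq hne (fun k => by simp [hij]), zero_mul]
    _ = _ := by
        rw [sum_injective_eq_sum_sum_perm]
        refine sum_congr rfl fun S _ => ?_
        have hperm (π : Perm (Fin m)) : (A.submatrix id (S.orderEmb ∘ π)).det =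
            Perm.sign π * (A.submatrix id S.orderEmb).det :=
          det_permute' π (A.submatrix id S.orderEmb)
        simp only [hperm, det_apply' (B.submatrix S.orderEmb id), submatrix_apply, id, mul_sum]
        exact sum_congr rfl fun π _ => by rw [mul_left_comm, mul_assoc]; rfl

noncomputable def compound (m : ℕ) (A : Matrix ι ι R) :
    Matrix (SubsetOfCard ι m) (SubsetOfCard ι m) R :=
  of fun S T => (A.submatrix S.orderEmb T.orderEmb).det

theorem compound_apply (A : Matrix ι ι R) (S T : SubsetOfCard ι m) :
    compound m A S T = (A.submatrix S.orderEmb T.orderEmb).det := rfl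

theorem compound_mul [Fintype ι] (A B : Matrix ι ι R) :
    compound m (A * B) = compound m A * compound m B := by
  ext S T
  rw [compound_apply, submatrix_mul A B _ id _ bijective_id, det_mul_eq_sum_det_submatrix]
  simp only [mul_apply, compound_apply, submatrix_submatrix, comp_id, id_comp]

theorem compound_transpose (A : Matrix ι ι R) : compound m Aᵀ = (compound m A)ᵀ := by
  ext S T
  rw [transpose_apply, compound_apply, compound_apply, ← transpose_submatrix, det_transpose]

theorem compound_diagonal (d : ι → R) :
    compound m (diagonal d) = diagonal fun S : SubsetOfCard ι m => ∏ i ∈ S.1, d i := by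
  ext S T
  rw [compound_apply]
  by_cases hST : S = T
  · subst hST
    rw [diagonal_apply_eq, submatrix_diagonal d _ S.orderEmb.injective, det_diagonal,
      ← map_orderEmbOfFin_univ S.1 S.2, prod_map]
    rfl
  · rw [diagonal_apply_ne _ hST]
    obtain ⟨a, haS, haT⟩ : ∃ a ∈ S.1, a ∉ T.1 := by
      by_contra! h
      exact hST (Subtype.ext (eq_of_subset_of_card_le h (T.2.trans S.2.symm).le))
    obtain ⟨i, rfl⟩ : a ∈ Set.range S.orderEmb := by rwa [orderEmb, range_orderEmbOfFin]
    refine det_eq_zero_of_row_eq_zero i fun j => diagonal_apply_ne _ fun h => haT ?_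
    rw [h]
    exact orderEmbOfFin_mem _ _ _

theorem compound_one : compound m (1 : Matrix ι ι R) = 1 := by
  rw [← diagonal_one, compound_diagonal]
  simp only [prod_const_one]
  rfl

section Rayleigh

variable {κ κ' : Type*} [Fintype κ] [Fintype κ']

theorem dotProduct_transpose_mul_mulVec {S : Type*} [CommSemiring S] (P : Matrix κ' κ S)
    (x : κ → S) : x ⬝ᵥ (Pᵀ * P) *ᵥ x = (P *ᵥ x) ⬝ᵥ (P *ᵥ x) := by
  rw [← mulVec_mulVec, dotProduct_mulVec, vecMul_transpose]

theorem dotProduct_transpose_mul_mul_mulVec {S : Type*} [CommSemiring S] (P : Matrix κ' κ S)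
    (N : Matrix κ' κ' S) (x : κ → S) :
    x ⬝ᵥ (Pᵀ * N * P) *ᵥ x = (P *ᵥ x) ⬝ᵥ N *ᵥ (P *ᵥ x) := by
  rw [← mulVec_mulVec, ← mulVec_mulVec, dotProduct_mulVec, vecMul_transpose]

def IsRayleighMax (M : Matrix κ κ ℝ) (c : ℝ) : Prop :=
  (∀ x : κ → ℝ, x ⬝ᵥ M *ᵥ x ≤ c * (x ⬝ᵥ x)) ∧ ∃ x : κ → ℝ, x ⬝ᵥ x = 1 ∧ x ⬝ᵥ M *ᵥ x = c

variable [DecidableEq κ]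

theorem isRayleighMax_diagonal {d : κ → ℝ} {i₀ : κ} (hd : ∀ i, d i ≤ d i₀) :
    IsRayleighMax (diagonal d) (d i₀) := by
  refine ⟨fun x => ?_, Pi.single i₀ 1, by simp, by simp⟩
  simp only [mulVec_diagonal, dotProduct, mul_sum]
  exact sum_le_sum fun i _ => by nlinarith [hd i, mul_self_nonneg (x i)]

theorem IsRayleighMax.conj_of_mul_transpose_eq_one {M U : Matrix κ κ ℝ} {c : ℝ}
    (hM : IsRayleighMax M c) (hU : U * Uᵀ = 1) : IsRayleighMax (U * M * Uᵀ) c := by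
  have hU' : Uᵀ * U = 1 := mul_eq_one_comm.mp hU
  have hconj (x : κ → ℝ) :
      x ⬝ᵥ (U * M * Uᵀ) *ᵥ x = (Uᵀ *ᵥ x) ⬝ᵥ M *ᵥ (Uᵀ *ᵥ x) := by
    rw [← dotProduct_transpose_mul_mul_mulVec, transpose_transpose]
  have hnorm (x : κ → ℝ) : (Uᵀ *ᵥ x) ⬝ᵥ (Uᵀ *ᵥ x) = x ⬝ᵥ x := by
    rw [← dotProduct_transpose_mul_mulVec, transpose_transpose, hU, one_mulVec]
  obtain ⟨hle, y, hy1, hyc⟩ := hM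
  refine ⟨fun x => by rw [hconj, ← hnorm]; exact hle _, U *ᵥ y, ?_, ?_⟩
  · rw [← hnorm, mulVec_mulVec, hU', one_mulVec, hy1]
  · rw [hconj, mulVec_mulVec, hU', one_mulVec, hyc]

end Rayleigh

end Matrix

theorem svalDesc_nonneg {n : ℕ} (M : Matrix (Fin n) (Fin n) ℝ) (i : Fin n) :
    0 ≤ svalDesc M i :=
  Real.sqrt_nonneg _

theorem isRayleighMax_compound_transpose_mul_self {n : ℕ} (M : Matrix (Fin n) (Fin n) ℝ)
    (k : Fin n) :
    IsRayleighMax (compound (k + 1) (Mᵀ * M)) (∏ i ∈ Iic k, svalDesc M i ^ 2) := by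
  set hN := isHermitian_conjTranspose_mul_self M
  set μ := hN.eigenvalues
  have hμ : ∀ i, 0 ≤ μ i := (posSemidef_conjTranspose_mul_self M).eigenvalues_nonneg
  set τ : Perm (Fin n) := Fin.revPerm.trans (Tuple.sort μ)
  have hτ : Antitone (μ ∘ τ) := (Tuple.monotone_sort μ).comp_antitone Fin.rev_anti
  have hsval (i : Fin n) : svalDesc M i ^ 2 = μ (τ i) := Real.sq_sqrt (hμ _)
  let S₀ : SubsetOfCard (Fin n) (k + 1) := ⟨(Iic k).map τ.toEmbedding, by simp⟩
  have hS₀ : ∏ i ∈ S₀.1, μ i = ∏ i ∈ Iic k, svalDesc M i ^ 2 := by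
    simp [S₀, prod_map, hsval]
  obtain ⟨U, hU, hspec⟩ :
      ∃ U : Matrix (Fin n) (Fin n) ℝ, U * Uᵀ = 1 ∧ Mᵀ * M = U * diagonal μ * Uᵀ :=
    ⟨hN.eigenvectorUnitary,
      by simpa [star_eq_conjTranspose] using mem_unitaryGroup_iff.mp hN.eigenvectorUnitary.2,
      by simpa [star_eq_conjTranspose] using hN.spectral_theorem⟩
  rw [← hS₀, hspec, compound_mul, compound_mul, compound_transpose, compound_diagonal]
  refine (isRayleighMax_diagonal fun S => ?_).conj_of_mul_transpose_eq_one ?_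
  · simp only [hS₀, hsval]
    exact prod_le_prod_Iic_of_antitone_comp hμ hτ S.2
  · rw [← compound_transpose, ← compound_mul, hU, compound_one]

theorem prod_svalDesc_mul_le {n : ℕ} (A B : Matrix (Fin n) (Fin n) ℝ) (k : Fin n) :
    ∏ i ∈ Iic k, svalDesc (A * B) i ≤ ∏ i ∈ Iic k, (svalDesc A i * svalDesc B i) := by
  obtain ⟨hA, -⟩ := isRayleighMax_compound_transpose_mul_self A k
  obtain ⟨hB, -⟩ := isRayleighMax_compound_transpose_mul_self B k
  obtain ⟨-, z, hz1, hzAB⟩ := isRayleighMax_compound_transpose_mul_self (A * B) k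
  have hgram : (A * B)ᵀ * (A * B) = Bᵀ * (Aᵀ * A) * B := by
    rw [transpose_mul, Matrix.mul_assoc, Matrix.mul_assoc, Matrix.mul_assoc]
  have hsq : (∏ i ∈ Iic k, svalDesc (A * B) i) ^ 2 ≤
      (∏ i ∈ Iic k, (svalDesc A i * svalDesc B i)) ^ 2 := by
    simp only [← prod_pow, mul_pow, prod_mul_distrib]
    calc ∏ i ∈ Iic k, svalDesc (A * B) i ^ 2
        = (compound (k + 1) B *ᵥ z) ⬝ᵥ
            compound (k + 1) (Aᵀ * A) *ᵥ (compound (k + 1) B *ᵥ z) := by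
          rw [← hzAB, hgram, compound_mul, compound_mul, compound_transpose,
            dotProduct_transpose_mul_mul_mulVec]
      _ ≤ (∏ i ∈ Iic k, svalDesc A i ^ 2) *
            (z ⬝ᵥ compound (k + 1) (Bᵀ * B) *ᵥ z) := by
          rw [compound_mul Bᵀ B, compound_transpose, dotProduct_transpose_mul_mulVec]
          exact hA _
      _ ≤ (∏ i ∈ Iic k, svalDesc A i ^ 2) * ∏ i ∈ Iic k, svalDesc B i ^ 2 := by
          refine mul_le_mul_of_nonneg_left ?_ (prod_nonneg fun _ _ => sq_nonneg _)
          simpa [hz1] using hB z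
  exact (pow_le_pow_iff_left₀ (prod_nonneg fun _ _ => svalDesc_nonneg _ _)
    (prod_nonneg fun _ _ => mul_nonneg (svalDesc_nonneg _ _) (svalDesc_nonneg _ _))
    two_ne_zero).mp hsq

theorem horn_two_sided_general {n : ℕ} (X Q : Matrix (Fin n) (Fin n) ℝ)
    (hQ : IsUnit Q.det) :
    ∀ k : Fin n,
      (∏ i ∈ Finset.Iic k, svalDesc (X * Q) i ≤
        ∏ i ∈ Finset.Iic k, (svalDesc X i * svalDesc Q i)) ∧
      (∏ i ∈ Finset.Iic k, svalDesc X i ≤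
        ∏ i ∈ Finset.Iic k, (svalDesc (X * Q) i * svalDesc Q⁻¹ i)) := fun k =>
  ⟨prod_svalDesc_mul_le X Q k, by
    simpa only [mul_nonsing_inv_cancel_right Q X hQ] using prod_svalDesc_mul_le (X * Q) Q⁻¹ k⟩

/-- Two-sided Horn-inequality estimate for X, Q invertible:
∏ᵢ σᵢ(XQ) ≤ ∏ᵢ σᵢ(X)σᵢ(Q) and ∏ᵢ σᵢ(X) ≤ ∏ᵢ σᵢ(XQ)σᵢ(Q⁻¹). -/
theorem horn_two_sided {n : ℕ} (X Q : Matrix (Fin n) (Fin n) ℝ)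
    (hX : IsUnit X.det) (hQ : IsUnit Q.det) :
    ∀ k : Fin n,
      (∏ i ∈ Finset.Iic k, svalDesc (X * Q) i ≤
        ∏ i ∈ Finset.Iic k, (svalDesc X i * svalDesc Q i)) ∧
      (∏ i ∈ Finset.Iic k, svalDesc X i ≤
        ∏ i ∈ Finset.Iic k, (svalDesc (X * Q) i * svalDesc Q⁻¹ i)) :=
  horn_two_sided_general X Q hQ
end

section
/- The Kaplan–Yorke dimension function is monotone in the sense: if λ_1 ≥ ... ≥ λ_n and μ_1 ≥ ... ≥ μ_n are ordered tuples with λ_i ≤ μ_i for all i, with λ_1 ≥ 0 and ∑μ_i < 0, then d^{KY}(λ) ≤ d^{KY}(μ). -/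
/-!
Let `j` be the last index whose partial sum `S_j = λ_1 + ⋯ + λ_j` is nonnegative, so that in the
generic case `d^{KY}(λ) = j + S_j / |λ_{j+1}|` with a fraction in `[0, 1)`. Raising the exponents
raises every partial sum, so `j` can only grow. If it grows, the integer part gains at least `1`,
which beats the fraction; if it stays, the numerator `S_j` grows while `|λ_{j+1}|` shrinks.
The degenerate cases follow from `0 ≤ d^{KY} ≤ n`.
-/

open Filter

/-- Partial sum of the first j entries of an ordered tuple. -/
noncomputable def pSum {n : ℕ} (l : Fin n → ℝ) (j : ℕ) : ℝ :=
  ∑ i ∈ Finset.univ.filter (fun i : Fin n => (i : ℕ) < j), l i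

open Classical in
/-- Kaplan–Yorke dimension of an ordered tuple of Lyapunov exponents. -/
noncomputable def dKY {n : ℕ} (l : Fin n → ℝ) : ℝ :=
  if hn : n = 0 then 0
  else if l ⟨0, Nat.pos_of_ne_zero hn⟩ < 0 then 0
  else if 0 ≤ pSum l n then n
  else
    (Nat.findGreatest (fun k => 0 ≤ pSum l k) (n - 1) : ℝ) +
      pSum l (Nat.findGreatest (fun k => 0 ≤ pSum l k) (n - 1)) /
        |l ⟨Nat.findGreatest (fun k => 0 ≤ pSum l k) (n - 1),
            Nat.lt_of_le_of_lt (Nat.findGreatest_le (n - 1))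
              (Nat.sub_lt (Nat.pos_of_ne_zero hn) one_pos)⟩|

open Finset

variable {n : ℕ}

lemma pSum_zero (l : Fin n → ℝ) : pSum l 0 = 0 := by
  simp [pSum]

lemma pSum_succ (l : Fin n → ℝ) {j : ℕ} (hj : j < n) :
    pSum l (j + 1) = pSum l j + l ⟨j, hj⟩ := by
  have hfilter : univ.filter (fun i : Fin n => (i : ℕ) < j + 1) =
      insert ⟨j, hj⟩ (univ.filter fun i : Fin n => (i : ℕ) < j) := by
    ext i
    simp only [mem_filter, mem_univ, true_and, mem_insert, Fin.ext_iff]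
    omega
  rw [pSum, hfilter, sum_insert (by simp), add_comm, pSum]

lemma pSum_mono {l m : Fin n → ℝ} (h : l ≤ m) (j : ℕ) : pSum l j ≤ pSum m j :=
  sum_le_sum fun i _ => h i

lemma pSum_div_abs_lt_one (l : Fin n → ℝ) {j : ℕ} (hj : j < n) (h : pSum l (j + 1) < 0) :
    pSum l j / |l ⟨j, hj⟩| < 1 := by
  rw [pSum_succ l hj] at h
  rcases eq_or_ne (l ⟨j, hj⟩) 0 with h0 | h0
  · simp [h0]
  · rw [div_lt_one (abs_pos.2 h0)]
    linarith [neg_le_abs (l ⟨j, hj⟩)]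

lemma pSum_div_abs_le_of_le {l m : Fin n → ℝ} (hle : l ≤ m) {j : ℕ} (hj : j < n)
    (hm₀ : 0 ≤ pSum m j) (hm : pSum m (j + 1) < 0) :
    pSum l j / |l ⟨j, hj⟩| ≤ pSum m j / |m ⟨j, hj⟩| := by
  have hmj : m ⟨j, hj⟩ < 0 := by linarith [pSum_succ m hj]
  have hlj : l ⟨j, hj⟩ < 0 := (hle _).trans_lt hmj
  refine div_le_div₀ hm₀ (pSum_mono hle j) (abs_pos.2 hmj.ne) ?_
  rw [abs_of_neg hmj, abs_of_neg hlj]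
  linarith [hle ⟨j, hj⟩]

lemma add_pSum_div_abs_le {l m : Fin n → ℝ} (hle : l ≤ m) {j k : ℕ} (hj : j < n) (hk : k < n)
    (hjk : j ≤ k) (hl : pSum l (j + 1) < 0) (hm₀ : 0 ≤ pSum m k) (hm : pSum m (k + 1) < 0) :
    (j : ℝ) + pSum l j / |l ⟨j, hj⟩| ≤ k + pSum m k / |m ⟨k, hk⟩| := by
  rcases hjk.eq_or_lt with rfl | hlt
  · exact add_le_add_right (pSum_div_abs_le_of_le hle hj hm₀ hm) _
  · calc (j : ℝ) + pSum l j / |l ⟨j, hj⟩| ≤ j + 1 :=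
          (add_lt_add_right (pSum_div_abs_lt_one l hj hl) _).le
      _ ≤ k := by exact_mod_cast hlt
      _ ≤ k + pSum m k / |m ⟨k, hk⟩| := le_add_of_nonneg_right (div_nonneg hm₀ (abs_nonneg _))

/-- The index `j` of the definition of `dKY`, counted from `0`, so that `λ_{j+1}` is `l ⟨j, _⟩`. -/
noncomputable def kyIndex (l : Fin n → ℝ) : ℕ :=
  Nat.findGreatest (fun k => 0 ≤ pSum l k) (n - 1)

lemma kyIndex_lt (l : Fin n → ℝ) (hn : 0 < n) : kyIndex l < n :=
  (Nat.findGreatest_le _).trans_lt (Nat.sub_lt hn one_pos)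

lemma pSum_kyIndex_nonneg (l : Fin n → ℝ) : 0 ≤ pSum l (kyIndex l) :=
  Nat.findGreatest_spec (P := fun k => 0 ≤ pSum l k) (Nat.zero_le _) (pSum_zero l).ge

lemma pSum_kyIndex_succ_neg (l : Fin n → ℝ) (hs : pSum l n < 0) :
    pSum l (kyIndex l + 1) < 0 := by
  have hn : 0 < n := Nat.pos_of_ne_zero fun h => by subst h; simp [pSum_zero] at hs
  rcases Nat.lt_or_eq_of_le (kyIndex_lt l hn) with h | h
  · exact not_le.1 (Nat.findGreatest_is_greatest (P := fun k => 0 ≤ pSum l k) (n := n - 1)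
      (Nat.lt_succ_self _) (by omega))
  · rwa [show kyIndex l + 1 = n from h]

lemma kyIndex_mono {l m : Fin n → ℝ} (h : l ≤ m) : kyIndex l ≤ kyIndex m :=
  Nat.findGreatest_mono_left (fun k hk => hk.trans (pSum_mono h k)) _

lemma dKY_of_head_neg {l : Fin n → ℝ} (hn : 0 < n) (h0 : l ⟨0, hn⟩ < 0) : dKY l = 0 := by
  simp [dKY, hn.ne', h0]

lemma dKY_of_sum_nonneg {l : Fin n → ℝ} (hn : 0 < n) (h0 : 0 ≤ l ⟨0, hn⟩) (hs : 0 ≤ pSum l n) :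
    dKY l = n := by
  simp [dKY, hn.ne', h0, hs]

lemma dKY_of_sum_neg {l : Fin n → ℝ} (hn : 0 < n) (h0 : 0 ≤ l ⟨0, hn⟩) (hs : pSum l n < 0) :
    dKY l = kyIndex l + pSum l (kyIndex l) / |l ⟨kyIndex l, kyIndex_lt l hn⟩| := by
  simp only [dKY, hn.ne', dite_false, not_lt.2 h0, if_false, not_le.2 hs]
  rfl

lemma dKY_nonneg (l : Fin n → ℝ) : 0 ≤ dKY l := by
  rcases Nat.eq_zero_or_pos n with rfl | hn
  · simp [dKY]
  rcases lt_or_ge (l ⟨0, hn⟩) 0 with h0 | h0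
  · rw [dKY_of_head_neg hn h0]
  rcases le_or_gt 0 (pSum l n) with hs | hs
  · rw [dKY_of_sum_nonneg hn h0 hs]
    positivity
  · rw [dKY_of_sum_neg hn h0 hs]
    exact add_nonneg (Nat.cast_nonneg _) (div_nonneg (pSum_kyIndex_nonneg l) (abs_nonneg _))

lemma dKY_le_card (l : Fin n → ℝ) : dKY l ≤ n := by
  rcases Nat.eq_zero_or_pos n with rfl | hn
  · simp [dKY]
  rcases lt_or_ge (l ⟨0, hn⟩) 0 with h0 | h0
  · rw [dKY_of_head_neg hn h0]
    positivity
  rcases le_or_gt 0 (pSum l n) with hs | hs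
  · rw [dKY_of_sum_nonneg hn h0 hs]
  · rw [dKY_of_sum_neg hn h0 hs]
    have hfrac := pSum_div_abs_lt_one l (kyIndex_lt l hn) (pSum_kyIndex_succ_neg l hs)
    have hj : (kyIndex l : ℝ) + 1 ≤ n := by exact_mod_cast kyIndex_lt l hn
    linarith

theorem kaplan_yorke_monotone_general {n : ℕ} (l m : Fin n → ℝ) (hle : ∀ i, l i ≤ m i) :
    dKY l ≤ dKY m := by
  rcases Nat.eq_zero_or_pos n with rfl | hn
  · simp [dKY]
  rcases lt_or_ge (l ⟨0, hn⟩) 0 with hl0 | hl0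
  · rw [dKY_of_head_neg hn hl0]
    exact dKY_nonneg m
  have hm0 : 0 ≤ m ⟨0, hn⟩ := hl0.trans (hle _)
  rcases le_or_gt 0 (pSum m n) with hms | hms
  · rw [dKY_of_sum_nonneg hn hm0 hms]
    exact dKY_le_card l
  have hls : pSum l n < 0 := (pSum_mono hle n).trans_lt hms
  rw [dKY_of_sum_neg hn hl0 hls, dKY_of_sum_neg hn hm0 hms]
  exact add_pSum_div_abs_le hle _ _ (kyIndex_mono hle) (pSum_kyIndex_succ_neg l hls)
    (pSum_kyIndex_nonneg m) (pSum_kyIndex_succ_neg m hms)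

/-- Monotonicity of the Kaplan–Yorke dimension in the ordered exponents. -/
theorem kaplan_yorke_monotone {n : ℕ} (hn : 0 < n) (l m : Fin n → ℝ)
    (hordl : Antitone l) (hordm : Antitone m) (hle : ∀ i, l i ≤ m i)
    (hl1 : 0 ≤ l ⟨0, hn⟩) (hmsum : ∑ i, m i < 0) :
    dKY l ≤ dKY m :=
  kaplan_yorke_monotone_general l m hle
end
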